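/- arXiv:1409.4175 — 5 statements merged into one kernel-verified Lean document; each statement's English description precedes it below -/
import Mathlib

section
/- Let R be a discrete valuation ring with uniformizer π, and let B = R × R with diagonal subring considerations as follows. Let A ⊆ R × R be the subring of pairs (α₁, α₂) with α₁ ≡ α₂ mod (π). If I ⊆ A is the ideal of pairs (α₁, α₂) ∈ A with α₁ ≡ 0 and α₂ ≡ 0 mod (π), then I/(π,π)A is generated by the image of a single element of the form (π^p λ, 0) with λ not divisible by π, for a unique integer p > 0 — in fact p = 1 and λ a unit works, and any generator of this form has p = 1. -/
open Ideal

variable (R : Type*) [CommRing R] [IsDomain R] [IsDiscreteValuationRing R] (π : R)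

/-- The subring `A ⊆ R × R` of pairs `(α₁, α₂)` with `α₁ ≡ α₂ mod (π)`. -/
def Asub : Subring (R × R) where
  carrier := {x | x.1 - x.2 ∈ Ideal.span {π}}
  zero_mem' := by simp
  one_mem' := by simp
  add_mem' := by
    intro a b ha hb
    simp only [Set.mem_setOf_eq, Prod.fst_add, Prod.snd_add] at *
    have : a.1 + b.1 - (a.2 + b.2) = (a.1 - a.2) + (b.1 - b.2) := by ring
    rw [this]; exact Ideal.add_mem _ ha hb
  neg_mem' := by
    intro a ha
    simp only [Set.mem_setOf_eq, Prod.fst_neg, Prod.snd_neg] at *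
    have : -a.1 - -a.2 = -(a.1 - a.2) := by ring
    rw [this]; exact neg_mem ha
  mul_mem' := by
    intro a b ha hb
    simp only [Set.mem_setOf_eq, Prod.fst_mul, Prod.snd_mul] at *
    have : a.1 * b.1 - a.2 * b.2 = a.1 * (b.1 - b.2) + b.2 * (a.1 - a.2) := by ring
    rw [this]
    exact Ideal.add_mem _ (Ideal.mul_mem_left _ _ hb) (Ideal.mul_mem_left _ _ ha)

/-- The ideal `I ⊆ A` of pairs `(α₁, α₂)` with `α₁ ≡ 0` and `α₂ ≡ 0 mod (π)`. -/
def Isub : Ideal (Asub R π) where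
  carrier := {x | (x : R × R).1 ∈ Ideal.span {π} ∧ (x : R × R).2 ∈ Ideal.span {π}}
  zero_mem' := by simp
  add_mem' := by
    intro a b ha hb
    exact ⟨Ideal.add_mem _ ha.1 hb.1, Ideal.add_mem _ ha.2 hb.2⟩
  smul_mem' := by
    intro c x hx
    exact ⟨Ideal.mul_mem_left _ _ hx.1, Ideal.mul_mem_left _ _ hx.2⟩

/-! The pair `(π, 0)` generates `I` modulo `(π, π)`, since `(π a, π b) = (a - b) (π, 0) + b (π, π)`.
Conversely, `(π ^ q μ, 0)` and `(π, π)` both lie in the ideal of pairs in `I` whose coordinates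
agree modulo `π²`, which for `q ≥ 2` is proper in `I` because it misses `(π, 0)`. -/

section

variable {R : Type*} [CommRing R] {π : R}

theorem mem_Isub_iff (x : Asub R π) :
    x ∈ Isub R π ↔ π ∣ (x : R × R).1 ∧ π ∣ (x : R × R).2 := by
  simp only [Isub, Submodule.mem_mk, AddSubmonoid.mem_mk, AddSubsemigroup.mem_mk,
    Set.mem_ofPred_eq, Ideal.mem_span_singleton]

theorem diag_mem_Asub (π r : R) : (r, r) ∈ Asub R π := by
  simp [Asub]

theorem Isub_eq_span_of_isUnit {u : R} (hu : IsUnit u) (h₁ : ((π * u, (0 : R)) : R × R) ∈ Asub R π)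
    (h₂ : ((π, π) : R × R) ∈ Asub R π) :
    Isub R π = Ideal.span {(⟨(π * u, 0), h₁⟩ : Asub R π), ⟨(π, π), h₂⟩} := by
  obtain ⟨u, rfl⟩ := hu
  apply le_antisymm
  · rintro x hx
    obtain ⟨⟨a, ha⟩, ⟨b, hb⟩⟩ := (mem_Isub_iff x).1 hx
    refine Ideal.mem_span_pair.2
      ⟨⟨_, diag_mem_Asub π ((a - b) * ↑u⁻¹)⟩, ⟨_, diag_mem_Asub π b⟩, Subtype.ext ?_⟩
    ext
    · simp only [Subring.coe_add, Subring.coe_mul, Prod.fst_add, Prod.fst_mul, ha]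
      linear_combination (a - b) * π * u.inv_mul
    · simp only [Subring.coe_add, Subring.coe_mul, Prod.snd_add, Prod.snd_mul, hb]
      ring
  · rw [Ideal.span_le]
    rintro x (rfl | rfl) <;> rw [SetLike.mem_coe, mem_Isub_iff] <;> simp

variable (R π) in
def IsubModSq : Ideal (Asub R π) where
  carrier := {x | π ∣ (x : R × R).2 ∧ π ^ 2 ∣ (x : R × R).1 - (x : R × R).2}
  zero_mem' := by simp
  add_mem' := by
    rintro a b ⟨ha₂, ha⟩ ⟨hb₂, hb⟩
    refine ⟨dvd_add ha₂ hb₂, ?_⟩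
    simpa [add_sub_add_comm] using dvd_add ha hb
  smul_mem' := by
    rintro ⟨c, hc⟩ x ⟨hx₂, hx⟩
    obtain ⟨s, hs⟩ := Ideal.mem_span_singleton.1 hc
    obtain ⟨t, ht⟩ := hx₂
    refine ⟨dvd_mul_of_dvd_right ⟨t, ht⟩ _, ?_⟩
    have : c.1 * (x : R × R).1 - c.2 * (x : R × R).2
        = c.1 * ((x : R × R).1 - (x : R × R).2) + π ^ 2 * (s * t) := by
      linear_combination (x : R × R).2 * hs + π * s * ht
    simpa [this] using dvd_add (dvd_mul_of_dvd_right hx _) (dvd_mul_right _ _)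

theorem span_le_IsubModSq {q : ℕ} (hq : 2 ≤ q) (μ : R)
    (h₁ : ((π ^ q * μ, (0 : R)) : R × R) ∈ Asub R π) (h₂ : ((π, π) : R × R) ∈ Asub R π) :
    Ideal.span {(⟨(π ^ q * μ, 0), h₁⟩ : Asub R π), ⟨(π, π), h₂⟩} ≤ IsubModSq R π := by
  rw [Ideal.span_le]
  rintro x (rfl | rfl)
  · exact ⟨dvd_zero π, by simpa using (pow_dvd_pow π hq).mul_right μ⟩
  · exact ⟨dvd_rfl, by simp⟩

theorem Isub_not_le_IsubModSq [IsDomain R] (hπ : Irreducible π) : ¬ Isub R π ≤ IsubModSq R π := by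
  intro h
  have hmem : (⟨(π, 0), by simp [Asub]⟩ : Asub R π) ∈ Isub R π :=
    (mem_Isub_iff _).2 ⟨dvd_rfl, dvd_zero π⟩
  have hsq : π ^ 2 ∣ π ^ 1 := by simpa using (h hmem).2
  exact absurd ((pow_dvd_pow_iff hπ.ne_zero hπ.not_isUnit).1 hsq) (by norm_num)

end

theorem stmt3 (hπ : Irreducible π)
    (hmem1 : ((π * 1, (0 : R)) : R × R) ∈ Asub R π)
    (hmemπ : ((π, π) : R × R) ∈ Asub R π) :
    -- p = 1 with λ = 1 (a unit not divisible by π) works: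
    (Isub R π = Ideal.span {(⟨(π * 1, 0), hmem1⟩ : Asub R π), ⟨(π, π), hmemπ⟩}) ∧
    -- uniqueness of p: any generator of this form has exponent 1:
    (∀ (q : ℕ) (μ : R), 0 < q → ¬ π ∣ μ →
      ∀ hq : ((π ^ q * μ, (0 : R)) : R × R) ∈ Asub R π,
        Isub R π = Ideal.span {(⟨(π ^ q * μ, 0), hq⟩ : Asub R π), ⟨(π, π), hmemπ⟩} →
        q = 1) := by
  refine ⟨Isub_eq_span_of_isUnit isUnit_one hmem1 hmemπ, fun q μ hq₀ _ hq hspan => ?_⟩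
  by_contra hq₁
  exact Isub_not_le_IsubModSq hπ
    (hspan ▸ span_le_IsubModSq (by omega) μ hq hmemπ)
end

section
/- Let R₁, R₂ be integral domains, μ ∈ R₂ nonzero, π₁ ∈ R₁, π₂ ∈ R₂ nonzero non-units with π₂ not dividing μ and π₂ prime, p ≥ 1, and Φ : R₁/(π₁^p μ₁) → R₂/(π₂^p μ) a ring isomorphism sending [π₁] to [π₂] (for some μ₁ ∈ R₁). Let a₁ ∈ R₁, a₂ ∈ R₂ satisfy Φ([a₁ π₁^{p+1}]) = [a₂ π₂^{p+1}]. Then Φ([a₁ π₁^p]) = [a₂ π₂^p]. -/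
/-- Proposition 3.1.4 in local-ring form: if `Φ([a₁ π₁^{p+1}]) = [a₂ π₂^{p+1}]` then
`Φ([a₁ π₁^p]) = [a₂ π₂^p]`. -/
theorem stmt5 (R₁ R₂ : Type*) [CommRing R₁] [IsDomain R₁] [CommRing R₂] [IsDomain R₂]
    (μ₁ : R₁) (μ : R₂) (hμ : μ ≠ 0)
    (π₁ : R₁) (π₂ : R₂) (hπ₁0 : π₁ ≠ 0) (hπ₁u : ¬ IsUnit π₁)
    (hπ₂ : Prime π₂) (hπ₂μ : ¬ π₂ ∣ μ)
    (p : ℕ) (hp : 1 ≤ p)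
    (Φ : (R₁ ⧸ Ideal.span {π₁ ^ p * μ₁}) ≃+* (R₂ ⧸ Ideal.span {π₂ ^ p * μ}))
    (hΦπ : Φ (Ideal.Quotient.mk _ π₁) = Ideal.Quotient.mk _ π₂)
    (a₁ : R₁) (a₂ : R₂)
    (h : Φ (Ideal.Quotient.mk _ (a₁ * π₁ ^ (p + 1))) = Ideal.Quotient.mk _ (a₂ * π₂ ^ (p + 1))) :
    Φ (Ideal.Quotient.mk _ (a₁ * π₁ ^ p)) = Ideal.Quotient.mk _ (a₂ * π₂ ^ p) := by
  obtain ⟨b, hb⟩ := Ideal.Quotient.mk_surjective (Φ (Ideal.Quotient.mk _ a₁))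
  have key : ∀ n : ℕ, Φ (Ideal.Quotient.mk _ (a₁ * π₁ ^ n)) =
      Ideal.Quotient.mk _ (b * π₂ ^ n) := by
    intro n
    rw [map_mul, map_mul, map_pow, map_pow, ← hb, hΦπ, ← map_pow, ← map_mul]
  have h1 : Ideal.Quotient.mk (Ideal.span {π₂ ^ p * μ}) (b * π₂ ^ (p + 1)) =
      Ideal.Quotient.mk _ (a₂ * π₂ ^ (p + 1)) := by rw [← key, h]
  rw [Ideal.Quotient.eq, Ideal.mem_span_singleton] at h1
  obtain ⟨β, hβ⟩ := h1
  have hc : π₂ ^ p * ((b - a₂) * π₂) = π₂ ^ p * (μ * β) := by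
    ring_nf; ring_nf at hβ; linear_combination hβ
  have hc2 : (b - a₂) * π₂ = μ * β :=
    mul_left_cancel₀ (pow_ne_zero p hπ₂.ne_zero) hc
  have hdvd : π₂ ∣ μ * β := ⟨b - a₂, by linear_combination -hc2⟩
  obtain ⟨γ, hγ⟩ := (hπ₂.dvd_mul.mp hdvd).resolve_left hπ₂μ
  have hc3 : b - a₂ = μ * γ := by
    apply mul_left_cancel₀ hπ₂.ne_zero
    linear_combination hc2 + μ * hγ
  rw [key, Ideal.Quotient.eq, Ideal.mem_span_singleton]
  exact ⟨γ, by linear_combination π₂ ^ p * hc3⟩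
end

section
/- Let R₁, R₂, Z₁, Z₂, π₁, π₂, p, Φ and A = {(α₁,α₂) : Φ([α₁]) = [α₂]} be as in the local model of a reducible deformation of a double curve, and set π = (π₁,π₂) ∈ A. Let Ā = {(ᾱ₁, ᾱ₂) ∈ R₁/(π₁^{p+1}) × R₂/(π₂^{p+1}) : Φ̄(ε(ᾱ₁)) = ε(ᾱ₂)}, where Φ̄ is the isomorphism R₁/((π₁^p Z₁)+(π₁^{p+1})) → R₂/((π₂^p Z₂)+(π₂^{p+1})) induced by Φ and ε denotes the natural quotient maps. Assume the conclusion of Proposition 3.1.4, i.e. every (u₁, u₂) ∈ A with π₁^{p+1} | u₁ and π₂^{p+1} | u₂ lies in πA. Then the natural projection A → Ā induces a ring isomorphism A/(π) ≅ Ā/(π). -/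
/-!
The projection `A → Ā` is a surjective ring map: a pair matching under `Φ̄` can be corrected
by an element of `π₂^p Z₂ + (π₂^{p+1})` into a pair matching under `Φ`, without changing it
modulo `π^{p+1}`. Its kernel consists of the pairs divisible by `(π₁^{p+1}, π₂^{p+1})`, which lie
in `πA` by Proposition 3.1.4. A surjection whose kernel lies in an ideal `I` induces an
isomorphism from the quotient by `I` onto the quotient by the image of `I`.
-/

open Ideal Ideal.Quotient

theorem Ideal.exists_mk_eq_mk_of_mk_sup_eq {R : Type*} [CommRing R] {I J : Ideal R} {a c : R}
    (h : mk (I ⊔ J) a = mk (I ⊔ J) c) : ∃ b, mk I b = mk I c ∧ mk J b = mk J a := by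
  obtain ⟨i, hi, j, hj, hij⟩ := Submodule.mem_sup.mp (Quotient.eq.mp h)
  refine ⟨c + i, ?_, ?_⟩
  · rw [Quotient.eq, add_sub_cancel_left]
    exact hi
  · rw [Quotient.eq, show c + i - a = -j by linear_combination hij]
    exact J.neg_mem hj

theorem Ideal.exists_mk_eq_and_mk_eq_of_compatible {X R : Type*} [CommRing R] {I J : Ideal R}
    (Φ : X → R ⧸ I) (Φbar : X → R ⧸ (I ⊔ J))
    (hΦbar : ∀ x a, Φ x = mk I a → Φbar x = mk (I ⊔ J) a) {x : X} {a : R}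
    (hx : Φbar x = mk (I ⊔ J) a) : ∃ b, Φ x = mk I b ∧ mk J b = mk J a := by
  obtain ⟨c, hc⟩ := mk_surjective (Φ x)
  obtain ⟨b, hbc, hba⟩ := exists_mk_eq_mk_of_mk_sup_eq (hx.symm.trans (hΦbar x c hc.symm))
  exact ⟨b, hc.symm.trans hbc.symm, hba⟩

theorem RingHom.exists_quotientEquiv_of_surjective {A B : Type*} [CommRing A] [CommRing B]
    {f : A →+* B} (hf : Function.Surjective f) {I : Ideal A} {J : Ideal B} (hIJ : I.map f = J)
    (hker : RingHom.ker f ≤ I) :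
    ∃ e : A ⧸ I ≃+* B ⧸ J, ∀ x, e (Ideal.Quotient.mk I x) = Ideal.Quotient.mk J (f x) := by
  have hcomap : J.comap f = I := by
    rw [← hIJ, comap_map_of_surjective f hf, ← RingHom.ker_eq_comap_bot, sup_eq_left.mpr hker]
  exact ⟨RingEquiv.ofBijective (quotientMap J f hcomap.ge)
    ⟨quotientMap_injective' hcomap.le, quotientMap_surjective hf⟩,
    fun _ => quotientMap_mk (H := hcomap.ge)⟩

theorem stmt6_general (R₁ R₂ : Type*) [CommRing R₁] [CommRing R₂]
    (Z₁ : Ideal R₁) (Z₂ : Ideal R₂) (π₁ : R₁) (π₂ : R₂) (p : ℕ)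
    (Φ : (R₁ ⧸ (Ideal.span {π₁ ^ p} * Z₁)) ≃+* (R₂ ⧸ (Ideal.span {π₂ ^ p} * Z₂)))
    -- the isomorphism `Φ̄` induced by `Φ` on the quotients by `(π^p Z) + (π^{p+1})`:
    (Φbar : (R₁ ⧸ (Ideal.span {π₁ ^ p} * Z₁ ⊔ Ideal.span {π₁ ^ (p + 1)})) ≃+*
            (R₂ ⧸ (Ideal.span {π₂ ^ p} * Z₂ ⊔ Ideal.span {π₂ ^ (p + 1)})))
    (hΦbar : ∀ (a₁ : R₁) (a₂ : R₂),
      Φ (Ideal.Quotient.mk _ a₁) = Ideal.Quotient.mk _ a₂ →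
      Φbar (Ideal.Quotient.mk _ a₁) = Ideal.Quotient.mk _ a₂)
    -- the subring `A` of pairs matching under `Φ`:
    (A : Subring (R₁ × R₂))
    (hA : (A : Set (R₁ × R₂)) =
      {x | Φ (Ideal.Quotient.mk _ x.1) = Ideal.Quotient.mk _ x.2})
    (hπA : (π₁, π₂) ∈ A)
    -- the subring `Ā` of pairs of classes mod `π_i^{p+1}` matching under `Φ̄`
    -- (`ε` being the natural quotient maps):
    (Abar : Subring ((R₁ ⧸ Ideal.span {π₁ ^ (p + 1)}) × (R₂ ⧸ Ideal.span {π₂ ^ (p + 1)})))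
    (hAbar : (Abar : Set ((R₁ ⧸ Ideal.span {π₁ ^ (p + 1)}) × (R₂ ⧸ Ideal.span {π₂ ^ (p + 1)}))) = {x | ∃ (a₁ : R₁) (a₂ : R₂),
      Ideal.Quotient.mk _ a₁ = x.1 ∧ Ideal.Quotient.mk _ a₂ = x.2 ∧
      Φbar (Ideal.Quotient.mk _ a₁) = Ideal.Quotient.mk _ a₂})
    (hπAbar : ((Ideal.Quotient.mk (Ideal.span {π₁ ^ (p + 1)}) π₁,
        Ideal.Quotient.mk (Ideal.span {π₂ ^ (p + 1)}) π₂)) ∈ Abar)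
    -- conclusion of Proposition 3.1.4:
    (h314 : ∀ x : A, π₁ ^ (p + 1) ∣ (x : R₁ × R₂).1 → π₂ ^ (p + 1) ∣ (x : R₁ × R₂).2 →
      x ∈ Ideal.span {(⟨(π₁, π₂), hπA⟩ : A)})
    -- the natural projection `A → Ā`:
    (proj : ∀ x : A, ((Ideal.Quotient.mk (Ideal.span {π₁ ^ (p + 1)}) (x : R₁ × R₂).1),
        (Ideal.Quotient.mk (Ideal.span {π₂ ^ (p + 1)}) (x : R₁ × R₂).2)) ∈ Abar) :
    ∃ e : (A ⧸ Ideal.span {(⟨(π₁, π₂), hπA⟩ : A)}) ≃+*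
          (Abar ⧸ Ideal.span {(⟨_, hπAbar⟩ : Abar)}),
      ∀ x : A, e (Ideal.Quotient.mk _ x) = Ideal.Quotient.mk _ ⟨_, proj x⟩ := by
  let f : A →+* Abar := (((mk _).prodMap (mk _)).comp A.subtype).codRestrict Abar proj
  have hf : Function.Surjective f := by
    rintro ⟨⟨x₁, x₂⟩, hx⟩
    rw [← SetLike.mem_coe, hAbar] at hx
    obtain ⟨a₁, a₂, rfl, rfl, hΦbar_a⟩ := hx
    obtain ⟨b₂, hΦ_b, hb⟩ := exists_mk_eq_and_mk_eq_of_compatible (Φ ∘ mk _) (Φbar ∘ mk _)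
      hΦbar hΦbar_a
    have hmem : (a₁, b₂) ∈ A := by
      rw [← SetLike.mem_coe, hA]
      exact hΦ_b
    exact ⟨⟨(a₁, b₂), hmem⟩, Subtype.ext (Prod.ext rfl hb)⟩
  have hker : RingHom.ker f ≤ span {⟨(π₁, π₂), hπA⟩} := fun x hx => by
    have hx0 := congrArg Subtype.val (RingHom.mem_ker.mp hx)
    exact h314 x (mem_span_singleton.mp (eq_zero_iff_mem.mp (congrArg Prod.fst hx0)))
      (mem_span_singleton.mp (eq_zero_iff_mem.mp (congrArg Prod.snd hx0)))
  exact f.exists_quotientEquiv_of_surjective hf (by rw [map_span, Set.image_singleton]; rfl) hker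

/-- Proposition 3.1.6 (localization): the natural projection `A → Ā` induces a ring
isomorphism `A/(π) ≅ Ā/(π)`, where `A` is the local model of a reducible deformation of a
double curve (pairs matching under `Φ`), and `Ā` is its image modulo `(π₁^{p+1}, π₂^{p+1})`
(pairs of classes matching under the induced isomorphism `Φ̄`).  We assume the conclusion of
Proposition 3.1.4: every element of `A` whose coordinates are divisible by `π₁^{p+1}`,
`π₂^{p+1}` lies in `π A`. -/
theorem stmt6 (R₁ R₂ : Type*) [CommRing R₁] [CommRing R₂]
    (Z₁ : Ideal R₁) (Z₂ : Ideal R₂) (π₁ : R₁) (π₂ : R₂) (p : ℕ) (hp : 1 ≤ p)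
    (Φ : (R₁ ⧸ (Ideal.span {π₁ ^ p} * Z₁)) ≃+* (R₂ ⧸ (Ideal.span {π₂ ^ p} * Z₂)))
    (hΦπ : Φ (Ideal.Quotient.mk _ π₁) = Ideal.Quotient.mk _ π₂)
    -- the isomorphism `Φ̄` induced by `Φ` on the quotients by `(π^p Z) + (π^{p+1})`:
    (Φbar : (R₁ ⧸ (Ideal.span {π₁ ^ p} * Z₁ ⊔ Ideal.span {π₁ ^ (p + 1)})) ≃+*
            (R₂ ⧸ (Ideal.span {π₂ ^ p} * Z₂ ⊔ Ideal.span {π₂ ^ (p + 1)})))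
    (hΦbar : ∀ (a₁ : R₁) (a₂ : R₂),
      Φ (Ideal.Quotient.mk _ a₁) = Ideal.Quotient.mk _ a₂ →
      Φbar (Ideal.Quotient.mk _ a₁) = Ideal.Quotient.mk _ a₂)
    -- the subring `A` of pairs matching under `Φ`:
    (A : Subring (R₁ × R₂))
    (hA : (A : Set (R₁ × R₂)) =
      {x | Φ (Ideal.Quotient.mk _ x.1) = Ideal.Quotient.mk _ x.2})
    (hπA : (π₁, π₂) ∈ A)
    -- the subring `Ā` of pairs of classes mod `π_i^{p+1}` matching under `Φ̄`
    -- (`ε` being the natural quotient maps):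
    (Abar : Subring ((R₁ ⧸ Ideal.span {π₁ ^ (p + 1)}) × (R₂ ⧸ Ideal.span {π₂ ^ (p + 1)})))
    (hAbar : (Abar : Set ((R₁ ⧸ Ideal.span {π₁ ^ (p + 1)}) × (R₂ ⧸ Ideal.span {π₂ ^ (p + 1)}))) = {x | ∃ (a₁ : R₁) (a₂ : R₂),
      Ideal.Quotient.mk _ a₁ = x.1 ∧ Ideal.Quotient.mk _ a₂ = x.2 ∧
      Φbar (Ideal.Quotient.mk _ a₁) = Ideal.Quotient.mk _ a₂})
    (hπAbar : ((Ideal.Quotient.mk (Ideal.span {π₁ ^ (p + 1)}) π₁,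
        Ideal.Quotient.mk (Ideal.span {π₂ ^ (p + 1)}) π₂)) ∈ Abar)
    -- conclusion of Proposition 3.1.4:
    (h314 : ∀ x : A, π₁ ^ (p + 1) ∣ (x : R₁ × R₂).1 → π₂ ^ (p + 1) ∣ (x : R₁ × R₂).2 →
      x ∈ Ideal.span {(⟨(π₁, π₂), hπA⟩ : A)})
    -- the natural projection `A → Ā`:
    (proj : ∀ x : A, ((Ideal.Quotient.mk (Ideal.span {π₁ ^ (p + 1)}) (x : R₁ × R₂).1),
        (Ideal.Quotient.mk (Ideal.span {π₂ ^ (p + 1)}) (x : R₁ × R₂).2)) ∈ Abar) :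
    ∃ e : (A ⧸ Ideal.span {(⟨(π₁, π₂), hπA⟩ : A)}) ≃+*
          (Abar ⧸ Ideal.span {(⟨_, hπAbar⟩ : Abar)}),
      ∀ x : A, e (Ideal.Quotient.mk _ x) = Ideal.Quotient.mk _ ⟨_, proj x⟩ :=
  stmt6_general R₁ R₂ Z₁ Z₂ π₁ π₂ p Φ Φbar hΦbar A hA hπA Abar hAbar hπAbar h314 proj
end

section
/- Let A be a commutative ring, ρ ∈ A, t a variable with t² = 0. Consider the subring B ⊆ (A[t]/(t²)) × (A[t]/(t²)) consisting of pairs of the form (a + bt, a + (b + ρβ)t) with a, b, β ∈ A. Then B is a subring, the element π = (t, t) lies in B, and the map B/(π) → A[t]/(t²) (with new variable z, z² = 0) sending the class of (a + bt, a + (b + ρβ)t) to a + βz is a well-defined ring isomorphism, provided ρ is a non-zerodivisor in A. -/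
/-!
The map `a + βz ↦ (a, a + ρβ t)` is a ring homomorphism `DualNumber A → B`. The ideal `(π)`
consists exactly of the pairs `(ct, ct)`, so every `(a + bt, a + (b + ρβ)t)` is congruent mod `π`
to the image of `a + βz`, and the map becomes surjective onto `B/(π)`. It is injective
there because `(a, a + ρβ t) = (ct, ct)` forces `a = 0`, `c = 0` and `ρβ = 0`, hence `β = 0` as
`ρ` is a non-zerodivisor.
-/

open TrivSqZeroExt

namespace DualNumber

variable {A : Type*} [CommRing A] (ρ : A)

def twistedPairs : Subring (DualNumber A × DualNumber A) where
  carrier := {x | ∃ a b β : A, x = (inl a + inr b, inl a + inr (b + ρ * β))}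
  one_mem' := ⟨1, 0, 0, by ext <;> simp⟩
  zero_mem' := ⟨0, 0, 0, by ext <;> simp⟩
  add_mem' := by
    rintro x y ⟨a, b, β, rfl⟩ ⟨a', b', β', rfl⟩
    exact ⟨a + a', b + b', β + β', by ext <;> simp; ring⟩
  neg_mem' := by
    rintro x ⟨a, b, β, rfl⟩
    exact ⟨-a, -b, -β, by ext <;> simp; ring⟩
  mul_mem' := by
    rintro x y ⟨a, b, β, rfl⟩ ⟨a', b', β', rfl⟩
    exact ⟨a * a', a * b' + a' * b, a * β' + a' * β, by
      ext <;> simp [smul_eq_mul] <;> ring⟩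

theorem diag_inr_mem_twistedPairs (c : A) :
    ((inr c, inr c) : DualNumber A × DualNumber A) ∈ twistedPairs ρ :=
  ⟨0, c, 0, by ext <;> simp⟩

def twistedPairsEps : twistedPairs ρ := ⟨(inr 1, inr 1), diag_inr_mem_twistedPairs ρ 1⟩

def twistedPairsSection : DualNumber A →+* twistedPairs ρ where
  toFun x := ⟨(inl x.fst, inl x.fst + inr (ρ * x.snd)), ⟨x.fst, 0, x.snd, by ext <;> simp⟩⟩
  map_one' := by ext <;> simp
  map_zero' := by ext <;> simp
  map_mul' x y := by ext <;> simp [smul_eq_mul]; ring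
  map_add' x y := by ext <;> simp; ring

theorem mem_span_twistedPairsEps_iff (x : twistedPairs ρ) :
    x ∈ Ideal.span {twistedPairsEps ρ} ↔
      ∃ c : A, (x : DualNumber A × DualNumber A) = (inr c, inr c) := by
  rw [Ideal.mem_span_singleton']
  constructor
  · rintro ⟨⟨y, a, b, β, rfl⟩, rfl⟩
    exact ⟨a, by ext <;> simp [twistedPairsEps, smul_eq_mul]⟩
  · rintro ⟨c, hc⟩
    refine ⟨twistedPairsSection ρ (inl c), Subtype.ext ?_⟩
    rw [hc]
    ext <;> simp [twistedPairsSection, twistedPairsEps, smul_eq_mul]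

theorem twistedPairsSection_sub_mem_span (a b β : A)
    (h : ((inl a + inr b, inl a + inr (b + ρ * β)) : DualNumber A × DualNumber A) ∈
      twistedPairs ρ) :
    twistedPairsSection ρ (inl a + inr β) - ⟨_, h⟩ ∈ Ideal.span {twistedPairsEps ρ} :=
  (mem_span_twistedPairsEps_iff ρ _).2 ⟨-b, by ext <;> simp [twistedPairsSection]⟩

def twistedPairsQuotientSection :
    DualNumber A →+* twistedPairs ρ ⧸ Ideal.span {twistedPairsEps ρ} :=
  (Ideal.Quotient.mk _).comp (twistedPairsSection ρ)

theorem twistedPairsQuotientSection_apply (a b β : A)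
    (h : ((inl a + inr b, inl a + inr (b + ρ * β)) : DualNumber A × DualNumber A) ∈
      twistedPairs ρ) :
    twistedPairsQuotientSection ρ (inl a + inr β) = Ideal.Quotient.mk _ ⟨_, h⟩ :=
  Ideal.Quotient.eq.2 (twistedPairsSection_sub_mem_span ρ a b β h)

theorem twistedPairsQuotientSection_surjective :
    Function.Surjective (twistedPairsQuotientSection ρ) := by
  rintro q
  obtain ⟨⟨x, a, b, β, rfl⟩, rfl⟩ := Ideal.Quotient.mk_surjective q
  exact ⟨_, twistedPairsQuotientSection_apply ρ a b β _⟩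

theorem twistedPairsQuotientSection_injective (hρ : ∀ a : A, ρ * a = 0 → a = 0) :
    Function.Injective (twistedPairsQuotientSection ρ) := by
  refine (injective_iff_map_eq_zero _).2 fun x hx => ?_
  obtain ⟨c, hc⟩ := (mem_span_twistedPairsEps_iff ρ _).1 (Ideal.Quotient.eq_zero_iff_mem.1 hx)
  have h₁ : inl x.fst = (inr c : DualNumber A) := congrArg Prod.fst hc
  have h₂ : inl x.fst + inr (ρ * x.snd) = (inr c : DualNumber A) := congrArg Prod.snd hc
  have hfst : x.fst = 0 := by simpa using congrArg fst h₁
  have hc0 : c = 0 := by simpa using (congrArg snd h₁).symm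
  have hsnd : ρ * x.snd = 0 := by simpa [hc0] using congrArg snd h₂
  ext
  · exact hfst
  · exact hρ _ hsnd

end DualNumber

open DualNumber

/-- Section 3.2.2: the subring `B` of `(A[t]/(t²))²` of pairs
`(a + bt, a + (b + ρβ)t)` contains `π = (t, t)`, and if `ρ` is a non-zerodivisor the map
`B/(π) → A[z]/(z²)`, class of `(a + bt, a + (b + ρβ)t) ↦ a + βz`, is a well-defined ring
isomorphism.  Here `A[t]/(t²)` is the ring of dual numbers, `t = ε = inr 1`, and
`a + bt = inl a + inr b`. -/
theorem stmt7 (A : Type*) [CommRing A] (ρ : A)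
    (hρ : ∀ a : A, ρ * a = 0 → a = 0) :
    ∃ B : Subring (DualNumber A × DualNumber A),
      (B : Set (DualNumber A × DualNumber A)) =
        {x | ∃ a b β : A, x = (inl a + inr b, inl a + inr (b + ρ * β))} ∧
      ∃ hπ : ((inr 1, inr 1) : DualNumber A × DualNumber A) ∈ B,
      ∃ e : (B ⧸ Ideal.span {(⟨(inr 1, inr 1), hπ⟩ : B)}) ≃+* DualNumber A,
        ∀ (a b β : A) (h : ((inl a + inr b, inl a + inr (b + ρ * β)) :
            DualNumber A × DualNumber A) ∈ B),
          e (Ideal.Quotient.mk _ ⟨_, h⟩) = inl a + inr β := by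
  let e := RingEquiv.ofBijective (twistedPairsQuotientSection ρ)
    ⟨twistedPairsQuotientSection_injective ρ hρ, twistedPairsQuotientSection_surjective ρ⟩
  refine ⟨twistedPairs ρ, rfl, diag_inr_mem_twistedPairs ρ 1, e.symm, fun a b β h => ?_⟩
  exact e.symm_apply_eq.2 (twistedPairsQuotientSection_apply ρ a b β h).symm
end

section
/- Let R be a discrete valuation ring with uniformizer π and residue field κ, and let I ⊆ R × R be the set of pairs (π^a λ, π^b μ) with λ, μ units, viewed inside a subring A ⊆ R × R closed under multiplication containing (π,π). Suppose p is the smallest integer q > 0 such that A contains a nonzero element of the form (π^q λ, 0) with λ a unit, and similarly q' is the smallest such integer for elements (0, π^{q'} μ) with μ a unit. If A contains an element (λ, μ) with λ, μ units (same residue class), then p = q'. -/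
namespace Subring

variable {R S : Type*} [Ring R] [Ring S] {A : Subring (R × S)} {a c : R} {b d : S}

theorem zero_mk_mem_of_mk_zero_mem (hab : ((a, b) : R × S) ∈ A)
    (hcd : ((c, d) : R × S) ∈ A) (hac : ((a * c, 0) : R × S) ∈ A) :
    (((0 : R), b * d) : R × S) ∈ A := by
  simpa using A.sub_mem (A.mul_mem hab hcd) hac

theorem mk_zero_mem_of_zero_mk_mem (hab : ((a, b) : R × S) ∈ A)
    (hcd : ((c, d) : R × S) ∈ A) (hbd : (((0 : R), b * d) : R × S) ∈ A) :
    ((a * c, (0 : S)) : R × S) ∈ A := by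
  simpa using A.sub_mem (A.mul_mem hab hcd) hbd

end Subring

theorem stmt10_general (R : Type*) [CommRing R]
    (π : R)
    (A : Subring (R × R)) (hπA : ((π, π) : R × R) ∈ A)
    (p q' : ℕ) (hp : 0 < p) (hq' : 0 < q')
    (hpmem : ∃ lam mu : R, IsUnit lam ∧ IsUnit mu ∧
      ((π ^ p * lam, 0) : R × R) ∈ A ∧ ((lam, mu) : R × R) ∈ A)
    (hpmin : ∀ (q : ℕ) (lam : R), 0 < q → IsUnit lam →
      ((π ^ q * lam, 0) : R × R) ∈ A → p ≤ q)
    (hq'mem : ∃ lam' mu' : R, IsUnit lam' ∧ IsUnit mu' ∧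
      (((0 : R), π ^ q' * mu') : R × R) ∈ A ∧ ((lam', mu') : R × R) ∈ A)
    (hq'min : ∀ (q : ℕ) (mu : R), 0 < q → IsUnit mu →
      (((0 : R), π ^ q * mu) : R × R) ∈ A → q' ≤ q) :
    p = q' := by
  obtain ⟨lam, mu, -, hmu, hfst, hlift⟩ := hpmem
  obtain ⟨lam', mu', hlam', -, hsnd, hlift'⟩ := hq'mem
  have hpow (n : ℕ) : ((π ^ n, π ^ n) : R × R) ∈ A := by
    simpa only [Prod.pow_mk] using A.pow_mem hπA n
  exact le_antisymm
    (hpmin q' lam' hq' hlam' (Subring.mk_zero_mem_of_zero_mk_mem (hpow q') hlift' hsnd))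
    (hq'min p mu hp hmu (Subring.zero_mk_mem_of_mk_zero_mem (hpow p) hlift hfst))

/-- Local content of Proposition 3.1.3(2) (`p = q`): in a subring `A ⊆ R × R` of a product
of two copies of a DVR containing `(π, π)`, if `p` is the smallest positive exponent such
that `A` contains an element `(π^p λ, 0)` with `λ` a unit, and the unit `λ` lifts to an
element `(λ, μ) ∈ A` with `μ` a unit, and symmetrically `q'` is the smallest positive
exponent with `(0, π^{q'} μ') ∈ A`, `μ'` a unit lifting to `(λ', μ') ∈ A` with `λ'` a
unit, then `p = q'`. -/
theorem stmt10 (R : Type*) [CommRing R] [IsDomain R] [IsDiscreteValuationRing R]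
    (π : R) (hπ : Irreducible π)
    (A : Subring (R × R)) (hπA : ((π, π) : R × R) ∈ A)
    (p q' : ℕ) (hp : 0 < p) (hq' : 0 < q')
    (hpmem : ∃ lam mu : R, IsUnit lam ∧ IsUnit mu ∧
      ((π ^ p * lam, 0) : R × R) ∈ A ∧ ((lam, mu) : R × R) ∈ A)
    (hpmin : ∀ (q : ℕ) (lam : R), 0 < q → IsUnit lam →
      ((π ^ q * lam, 0) : R × R) ∈ A → p ≤ q)
    (hq'mem : ∃ lam' mu' : R, IsUnit lam' ∧ IsUnit mu' ∧
      (((0 : R), π ^ q' * mu') : R × R) ∈ A ∧ ((lam', mu') : R × R) ∈ A)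
    (hq'min : ∀ (q : ℕ) (mu : R), 0 < q → IsUnit mu →
      (((0 : R), π ^ q * mu) : R × R) ∈ A → q' ≤ q) :
    p = q' :=
  stmt10_general R π A hπA p q' hp hq' hpmem hpmin hq'mem hq'min
end
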